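/- For every permutation w of {1,…,n}: Φ(w) ≤_R w in right weak order, and Φ_inv(w) ≤_L w in left weak order. In other words, there are length-additive factorizations w = Φ(w)·v and w = u·Φ_inv(w) for some permutations u, v. -/

import Mathlib

/-!
Right weak order is containment of inversion sets recorded by values, so it suffices that
whenever `p < q` and `p` stands left of `q` in `w`, the same holds in `Φ(w)`. The block of a
value is determined by the length of the longest increasing run starting at it, and that length
is larger for `p` than for `q`. Following a longest increasing run from the maximum of the
block of `p` down to length equal to that of `q` reaches a larger value in the block of `q`;
hence the block of `p` has the smaller maximum and `Φ(w)` lists `p` before `q`. The claim for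
`Φ_inv` follows by inverting everything.
-/

open scoped Classical

noncomputable section

namespace RajRegularity

variable {n : ℕ}

/-- Maximal length of an increasing subsequence of `w(i), …, w(n)` beginning with `w(i)`:
the largest cardinality of a set `s` of positions that contains `i`, consists of positions
`≥ i`, and on which `w` is strictly increasing. -/
def lisFrom (w : Equiv.Perm (Fin n)) (i : Fin n) : ℕ :=
  (Finset.univ.filter fun s : Finset (Fin n) =>
      i ∈ s ∧ (∀ j ∈ s, i ≤ j) ∧ ∀ j ∈ s, ∀ k ∈ s, j < k → w j < w k).sup Finset.card

/-- `rajCode w i = (n − i + 1) −` (maximal length of an increasing subsequence of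
`w(i), …, w(n)` beginning with `w(i)`); here positions are 0-based, so the number of
positions `≥ i` is `n - i`. -/
def rajCode (w : Equiv.Perm (Fin n)) (i : Fin n) : ℕ :=
  (n - (i : ℕ)) - lisFrom w i

/-- The Rajchgot index `raj w = Σᵢ rajCode w i`. -/
def raj (w : Equiv.Perm (Fin n)) : ℕ := ∑ i, rajCode w i

/-- The number of inversions of `w`: pairs of positions `i < j` with `w i > w j`. -/
def invNum (w : Equiv.Perm (Fin n)) : ℕ :=
  (Finset.univ.filter fun p : Fin n × Fin n => p.1 < p.2 ∧ w p.2 < w p.1).card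

/-- The `i`-th entry of the inv code: `ℓ_i(w) = #{ j : i < j, w j < w i }`. -/
def ellCode (w : Equiv.Perm (Fin n)) (i : Fin n) : ℕ :=
  (Finset.univ.filter fun j : Fin n => i < j ∧ w j < w i).card

/-- The set of descent positions of `w` (0-based position `j` with `w j > w (j+1)`). -/
def descents (w : Equiv.Perm (Fin n)) : Finset (Fin n) :=
  Finset.univ.filter fun j : Fin n =>
    if h : (j : ℕ) + 1 < n then w ⟨(j : ℕ) + 1, h⟩ < w j else False

/-- The major index: the sum of the (1-based) descent positions of `w`. -/
def maj (w : Equiv.Perm (Fin n)) : ℕ := ∑ j ∈ descents w, ((j : ℕ) + 1)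

/-- `mCode w i`: the number of descents of `w` at positions `≥ i`. -/
def mCode (w : Equiv.Perm (Fin n)) (i : Fin n) : ℕ :=
  ((descents w).filter fun j => i ≤ j).card

/-- `w` is dominant iff it avoids the pattern 132. -/
def Dominant (w : Equiv.Perm (Fin n)) : Prop :=
  ¬ ∃ i j k : Fin n, i < j ∧ j < k ∧ w i < w k ∧ w k < w j

/-- `w` is fireworks iff there are no positions `i < j` with `w j < w (j+1) < w i`. -/
def Fireworks (w : Equiv.Perm (Fin n)) : Prop :=
  ¬ ∃ (i j : Fin n) (h : (j : ℕ) + 1 < n),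
      i < j ∧ w j < w ⟨(j : ℕ) + 1, h⟩ ∧ w ⟨(j : ℕ) + 1, h⟩ < w i

/-- `w` is inverse fireworks iff `w⁻¹` is fireworks. -/
def InvFireworks (w : Equiv.Perm (Fin n)) : Prop := Fireworks w⁻¹

/-- `w` is a valley permutation: for some `a`, it is strictly decreasing on positions `≤ a`
and strictly increasing on positions `≥ a`. -/
def Valley (w : Equiv.Perm (Fin n)) : Prop :=
  ∃ a : ℕ, (∀ i j : Fin n, i < j → (j : ℕ) ≤ a → w j < w i) ∧
    ∀ i j : Fin n, a ≤ (i : ℕ) → i < j → w i < w j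

/-- `eps w i` is the (1-based) blob index `ε_i(w) = i + r_i(w)`. -/
def eps (w : Equiv.Perm (Fin n)) (i : Fin n) : ℕ := (i : ℕ) + 1 + rajCode w i

/-- The shape of `w`: `α_k(w) = #{ i : ε_i(w) = k }` (here `k : Fin n` stands for the
1-based index `k + 1`). -/
def shape (w : Equiv.Perm (Fin n)) : Fin n → ℕ := fun k =>
  (Finset.univ.filter fun i : Fin n => eps w i = (k : ℕ) + 1).card

/-- Dominance order on shapes: `α ⪰ β` iff every tail sum of `α` is at least the
corresponding tail sum of `β`. -/
def Dominates (α β : Fin n → ℕ) : Prop :=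
  ∀ m : Fin n,
    ∑ k ∈ Finset.univ.filter (fun k : Fin n => m ≤ k), β k ≤
      ∑ k ∈ Finset.univ.filter (fun k : Fin n => m ≤ k), α k

/-- Right weak order: `u ≤_R w` iff `w = u * v` length-additively. -/
def leR (u w : Equiv.Perm (Fin n)) : Prop :=
  ∃ v : Equiv.Perm (Fin n), w = u * v ∧ invNum w = invNum u + invNum v

/-- Left weak order: `u ≤_L w` iff `w = v * u` length-additively. -/
def leL (u w : Equiv.Perm (Fin n)) : Prop :=
  ∃ v : Equiv.Perm (Fin n), w = v * u ∧ invNum w = invNum v + invNum u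

/-- Two-sided weak order: the transitive closure of the union of left and right weak
orders (both are reflexive, so we may use the reflexive-transitive closure). -/
def leLR (u w : Equiv.Perm (Fin n)) : Prop :=
  Relation.ReflTransGen (fun a b : Equiv.Perm (Fin n) => leL a b ∨ leR a b) u w

/-- The maximum of the block of the set partition `π(w)` containing the value `v`;
the block of `v` is `{ v' : ε_{w⁻¹ v'}(w) = ε_{w⁻¹ v}(w) }`. -/
def blockMax (w : Equiv.Perm (Fin n)) (v : Fin n) : ℕ :=
  ((Finset.univ.filter fun v' : Fin n => eps w (w⁻¹ v') = eps w (w⁻¹ v)).max'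
      ⟨v, Finset.mem_filter.mpr ⟨Finset.mem_univ v, rfl⟩⟩).val

/-- The fireworks map `Φ`: the one-line word of `Φ w` lists the blocks of `π(w)` in
increasing order of their maxima, each block written in decreasing order.  Equivalently,
`Φ w` sorts the values by the key (max of block, value reversed), lexicographically. -/
def Phi (w : Equiv.Perm (Fin n)) : Equiv.Perm (Fin n) :=
  Tuple.sort fun v : Fin n => n * blockMax w v + (n - 1 - (v : ℕ))

/-- The inverse fireworks map `Φ_inv w = Φ(w⁻¹)⁻¹`. -/
def PhiInv (w : Equiv.Perm (Fin n)) : Equiv.Perm (Fin n) := (Phi w⁻¹)⁻¹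

/-- Partial sums of a sequence of block sizes. -/
def psum (a : ℕ → ℕ) (m : ℕ) : ℕ := ∑ j ∈ Finset.range m, a j

/-- The index of the block (interval `[psum a m, psum a (m+1))`) containing the value `v`. -/
def blockIdx (n : ℕ) (a : ℕ → ℕ) (v : Fin n) : ℕ :=
  ((Finset.range n).filter fun m => psum a (m + 1) ≤ (v : ℕ)).card

/-- The layered permutation with block sizes `a 0, a 1, …`: it reverses each of the
consecutive intervals `[psum a m, psum a (m+1))` of `{0, …, n-1}`.  Equivalently, its
one-line word sorts the values by (block index, value reversed) lexicographically. -/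
def layered (n : ℕ) (a : ℕ → ℕ) : Equiv.Perm (Fin n) :=
  Tuple.sort fun v : Fin n => n * blockIdx n a v + (n - 1 - (v : ℕ))

/-- The layered permutation `e_α` associated to a shape `α : Fin n → ℕ`. -/
def eOf (α : Fin n → ℕ) : Equiv.Perm (Fin n) :=
  layered n fun m => if h : m < n then α ⟨m, h⟩ else 0


section WeakOrder

/-- Inversions recorded by values rather than positions: `u ≤_R w` amounts to
`invVal u ⊆ invVal w`. -/
def invVal (w : Equiv.Perm (Fin n)) : Finset (Fin n × Fin n) :=
  Finset.univ.filter fun p : Fin n × Fin n => p.1 < p.2 ∧ w⁻¹ p.2 < w⁻¹ p.1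

lemma invNum_eq_card_invVal (w : Equiv.Perm (Fin n)) : invNum w = (invVal w).card := by
  refine Finset.card_bij' (fun p _ => (w p.2, w p.1)) (fun p _ => (w⁻¹ p.2, w⁻¹ p.1))
    ?_ ?_ (fun _ _ => by simp) (fun _ _ => by simp) <;>
  · intro p hp
    simp only [invVal, Finset.mem_filter, Finset.mem_univ, true_and] at hp ⊢
    simpa using hp.symm

lemma invNum_inv (w : Equiv.Perm (Fin n)) : invNum w⁻¹ = invNum w := by
  rw [invNum_eq_card_invVal]
  simp [invNum, invVal]

lemma card_invVal_inv_mul {u w : Equiv.Perm (Fin n)} (h : invVal u ⊆ invVal w) :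
    (invVal (u⁻¹ * w)).card = (invVal w \ invVal u).card := by
  refine Finset.card_bij' (fun x _ => (u x.1, u x.2)) (fun x _ => (u⁻¹ x.1, u⁻¹ x.2))
    ?_ ?_ (fun _ _ => by simp) (fun _ _ => by simp)
  · rintro ⟨a, b⟩ hab
    simp only [invVal, Finset.mem_filter, Finset.mem_univ, true_and, mul_inv_rev, inv_inv,
      Equiv.Perm.mul_apply] at hab
    obtain ⟨hlt, hw⟩ := hab
    have hu : u a < u b := by
      by_contra! hba
      have hmem : (u b, u a) ∈ invVal u := Finset.mem_filter.mpr
        ⟨Finset.mem_univ _, lt_of_le_of_ne hba (u.injective.ne hlt.ne'), by simpa using hlt⟩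
      exact hw.not_gt (Finset.mem_filter.mp (h hmem)).2.2
    refine Finset.mem_sdiff.mpr
      ⟨Finset.mem_filter.mpr ⟨Finset.mem_univ _, hu, hw⟩, fun hmem => hlt.not_gt ?_⟩
    simpa using (Finset.mem_filter.mp hmem).2.2
  · rintro ⟨p, q⟩ hpq
    simp only [invVal, Finset.mem_sdiff, Finset.mem_filter, Finset.mem_univ, true_and,
      not_and, not_lt] at hpq
    obtain ⟨⟨hlt, hw⟩, hu⟩ := hpq
    refine Finset.mem_filter.mpr
      ⟨Finset.mem_univ _, lt_of_le_of_ne (hu hlt) (u⁻¹.injective.ne hlt.ne), ?_⟩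
    simpa using hw

lemma leR_of_invVal_subset {u w : Equiv.Perm (Fin n)} (h : invVal u ⊆ invVal w) : leR u w := by
  refine ⟨u⁻¹ * w, by group, ?_⟩
  rw [invNum_eq_card_invVal, invNum_eq_card_invVal, invNum_eq_card_invVal,
    card_invVal_inv_mul h, ← Finset.card_sdiff_add_card_eq_card h, add_comm]

lemma leL_inv_inv_of_leR {u w : Equiv.Perm (Fin n)} (h : leR u w) : leL u⁻¹ w⁻¹ := by
  obtain ⟨v, rfl, hlen⟩ := h
  refine ⟨v⁻¹, mul_inv_rev u v, ?_⟩
  rw [invNum_inv, invNum_inv, invNum_inv, hlen, add_comm]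

end WeakOrder

section IncreasingRuns

variable {w : Equiv.Perm (Fin n)}

/-- The sets of positions over which `lisFrom w i` takes its supremum. -/
def IsIncreasingFrom (w : Equiv.Perm (Fin n)) (i : Fin n) (s : Finset (Fin n)) : Prop :=
  i ∈ s ∧ (∀ j ∈ s, i ≤ j) ∧ ∀ j ∈ s, ∀ k ∈ s, j < k → w j < w k

lemma isIncreasingFrom_singleton (i : Fin n) : IsIncreasingFrom w i {i} :=
  ⟨Finset.mem_singleton_self i, by simp, by simp⟩

lemma IsIncreasingFrom.insert {i m : Fin n} {s : Finset (Fin n)} (hs : IsIncreasingFrom w m s)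
    (him : i < m) (hw : w i < w m) : IsIncreasingFrom w i (insert i s) := by
  obtain ⟨hm, hge, hinc⟩ := hs
  have hlt : ∀ j ∈ s, i < j := fun j hj => him.trans_le (hge j hj)
  have hwlt : ∀ j ∈ s, w i < w j := fun j hj =>
    (hge j hj).eq_or_lt.elim (fun h => h ▸ hw) (fun h => hw.trans (hinc m hm j hj h))
  refine ⟨Finset.mem_insert_self i s, ?_, ?_⟩
  · simpa using fun j hj => (hlt j hj).le
  · simp only [Finset.mem_insert]
    rintro j (rfl | hj) k (rfl | hk) hjk
    · exact absurd hjk (lt_irrefl _)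
    · exact hwlt k hk
    · exact absurd hjk (hlt j hj).not_gt
    · exact hinc j hj k hk hjk

lemma IsIncreasingFrom.erase {m : Fin n} {s : Finset (Fin n)} (hs : IsIncreasingFrom w m s)
    (hne : (s.erase m).Nonempty) :
    ∃ m', m < m' ∧ w m < w m' ∧ IsIncreasingFrom w m' (s.erase m) := by
  obtain ⟨hm, hge, hinc⟩ := hs
  have hmem := Finset.min'_mem _ hne
  have hlt : m < (s.erase m).min' hne :=
    lt_of_le_of_ne (hge _ (Finset.mem_of_mem_erase hmem)) (Finset.ne_of_mem_erase hmem).symm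
  exact ⟨_, hlt, hinc m hm _ (Finset.mem_of_mem_erase hmem) hlt, hmem,
    fun j hj => Finset.min'_le _ j hj,
    fun j hj k hk => hinc j (Finset.mem_of_mem_erase hj) k (Finset.mem_of_mem_erase hk)⟩

lemma card_le_lisFrom {i : Fin n} {s : Finset (Fin n)} (hs : IsIncreasingFrom w i s) :
    s.card ≤ lisFrom w i :=
  Finset.le_sup (f := Finset.card) (Finset.mem_filter.mpr ⟨Finset.mem_univ s, hs⟩)

lemma exists_isIncreasingFrom_card_eq (i : Fin n) :
    ∃ s, IsIncreasingFrom w i s ∧ s.card = lisFrom w i := by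
  obtain ⟨s, hs, hcard⟩ : ∃ s ∈ (_ : Finset (Finset (Fin n))), lisFrom w i = s.card :=
    Finset.exists_mem_eq_sup _
      ⟨{i}, Finset.mem_filter.mpr ⟨Finset.mem_univ _, isIncreasingFrom_singleton i⟩⟩ _
  exact ⟨s, (Finset.mem_filter.mp hs).2, hcard.symm⟩

lemma lisFrom_pos (i : Fin n) : 0 < lisFrom w i :=
  card_le_lisFrom (isIncreasingFrom_singleton (w := w) i)

lemma lisFrom_le (i : Fin n) : lisFrom w i ≤ n - i :=
  Finset.sup_le fun _ hs => (Fin.card_Ici i).symm ▸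
    Finset.card_le_card fun j hj => Finset.mem_Ici.mpr ((Finset.mem_filter.mp hs).2.2.1 j hj)

lemma lisFrom_lt_lisFrom {i j : Fin n} (hij : i < j) (hw : w i < w j) :
    lisFrom w j < lisFrom w i := by
  obtain ⟨s, hs, hcard⟩ := exists_isIncreasingFrom_card_eq (w := w) j
  have := card_le_lisFrom (hs.insert hij hw)
  rw [Finset.card_insert_of_notMem fun hi => (hs.2.1 i hi).not_gt hij] at this
  omega

/-- The second entry of a longest increasing run from `m` starts a run one shorter. -/
lemma exists_lt_lisFrom_eq_pred {m : Fin n} (h : 1 < lisFrom w m) :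
    ∃ t, w m < w t ∧ lisFrom w t = lisFrom w m - 1 := by
  obtain ⟨s, hs, hcard⟩ := exists_isIncreasingFrom_card_eq (w := w) m
  have hne : (s.erase m).Nonempty :=
    Finset.card_pos.mp (by rw [Finset.card_erase_of_mem hs.1]; omega)
  obtain ⟨t, hmt, hwt, ht⟩ := hs.erase hne
  have hge := card_le_lisFrom ht
  have hlt := lisFrom_lt_lisFrom hmt hwt
  rw [Finset.card_erase_of_mem hs.1] at hge
  exact ⟨t, hwt, by omega⟩

lemma exists_lt_lisFrom_eq {ℓ : ℕ} (hℓ : 0 < ℓ) {m : Fin n} (h : ℓ < lisFrom w m) :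
    ∃ t, w m < w t ∧ lisFrom w t = ℓ := by
  obtain ⟨d, hd⟩ := Nat.exists_eq_add_of_lt h
  induction d generalizing m with
  | zero =>
    obtain ⟨t, hmt, ht⟩ := exists_lt_lisFrom_eq_pred (w := w) (m := m) (by omega)
    exact ⟨t, hmt, by omega⟩
  | succ d ih =>
    obtain ⟨t, hmt, ht⟩ := exists_lt_lisFrom_eq_pred (w := w) (m := m) (by omega)
    obtain ⟨t', htt', ht'⟩ := ih (m := t) (by omega) (by omega)
    exact ⟨t', hmt.trans htt', ht'⟩

lemma eps_eq (i : Fin n) : eps w i = n + 1 - lisFrom w i := by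
  have := lisFrom_le (w := w) i
  have := i.isLt
  unfold eps rajCode
  omega

lemma eps_eq_eps_iff {i j : Fin n} : eps w i = eps w j ↔ lisFrom w i = lisFrom w j := by
  have := lisFrom_le (w := w) i
  have := lisFrom_le (w := w) j
  rw [eps_eq, eps_eq]
  omega

end IncreasingRuns

section Fireworks

variable {w : Equiv.Perm (Fin n)}

lemma le_blockMax {v v' : Fin n} (h : lisFrom w (w⁻¹ v') = lisFrom w (w⁻¹ v)) :
    (v' : ℕ) ≤ blockMax w v :=
  Finset.le_max' _ v' (Finset.mem_filter.mpr ⟨Finset.mem_univ v', eps_eq_eps_iff.mpr h⟩)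

lemma exists_blockMax_eq (v : Fin n) :
    ∃ M : Fin n, blockMax w v = M ∧ lisFrom w (w⁻¹ M) = lisFrom w (w⁻¹ v) := by
  have hmem := Finset.max'_mem
    (Finset.univ.filter fun v' : Fin n => eps w (w⁻¹ v') = eps w (w⁻¹ v))
    ⟨v, Finset.mem_filter.mpr ⟨Finset.mem_univ v, rfl⟩⟩
  exact ⟨_, rfl, eps_eq_eps_iff.mp (Finset.mem_filter.mp hmem).2⟩

lemma blockMax_lt_blockMax {p q : Fin n} (hpq : p < q) (hw : w⁻¹ p < w⁻¹ q) :
    blockMax w p < blockMax w q := by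
  obtain ⟨M, hM, hMp⟩ := exists_blockMax_eq (w := w) p
  have hqp : lisFrom w (w⁻¹ q) < lisFrom w (w⁻¹ p) :=
    lisFrom_lt_lisFrom hw (by simpa using hpq)
  obtain ⟨t, hMt, ht⟩ := exists_lt_lisFrom_eq (lisFrom_pos _) (hMp ▸ hqp)
  rw [hM]
  calc (M : ℕ) < w t := by simpa using hMt
    _ ≤ blockMax w q := le_blockMax (by simpa using ht)

lemma _root_.Tuple.sort_inv_lt_sort_inv {α : Type*} [LinearOrder α] {f : Fin n → α}
    {p q : Fin n} (h : f p < f q) : (Tuple.sort f)⁻¹ p < (Tuple.sort f)⁻¹ q := by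
  by_contra! hle
  have := Tuple.monotone_sort f hle
  simp only [Function.comp_apply, Equiv.Perm.inv_def, Equiv.apply_symm_apply] at this
  exact this.not_gt h

lemma phiKey_lt_phiKey {a b x y : ℕ} (hx : x < n) (hab : a < b) :
    n * a + (n - 1 - x) < n * b + (n - 1 - y) :=
  calc n * a + (n - 1 - x) < n * (a + 1) := by rw [mul_add_one]; omega
    _ ≤ n * b := Nat.mul_le_mul_left n hab
    _ ≤ n * b + (n - 1 - y) := Nat.le_add_right _ _

lemma phi_inv_lt_phi_inv {p q : Fin n} (hpq : p < q) (hw : w⁻¹ p < w⁻¹ q) :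
    (Phi w)⁻¹ p < (Phi w)⁻¹ q :=
  Tuple.sort_inv_lt_sort_inv (phiKey_lt_phiKey p.isLt (blockMax_lt_blockMax hpq hw))

lemma invVal_phi_subset (w : Equiv.Perm (Fin n)) : invVal (Phi w) ⊆ invVal w := by
  intro ⟨p, q⟩ hpq
  simp only [invVal, Finset.mem_filter, Finset.mem_univ, true_and] at hpq ⊢
  obtain ⟨hlt, hphi⟩ := hpq
  refine ⟨hlt, (lt_or_gt_of_ne (w⁻¹.injective.ne hlt.ne')).resolve_right fun hw => ?_⟩
  exact hphi.not_gt (phi_inv_lt_phi_inv hlt hw)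

end Fireworks

/-- `Φ(w) ≤_R w` and `Φ_inv(w) ≤_L w`; i.e. there are length-additive
factorizations `w = Φ(w)·v` and `w = u·Φ_inv(w)` (this is the definition of `leR`, `leL`). -/
theorem phi_leR_and_phiInv_leL (n : ℕ) (w : Equiv.Perm (Fin n)) :
    leR (Phi w) w ∧ leL (PhiInv w) w := by
  refine ⟨leR_of_invVal_subset (invVal_phi_subset w), ?_⟩
  simpa [PhiInv] using leL_inv_inv_of_leR (leR_of_invVal_subset (invVal_phi_subset w⁻¹))

end RajRegularity
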